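/- arXiv:1303.1346 — 2 statements merged into one kernel-verified Lean document; each statement's English description precedes it below -/
import Mathlib

section
/- Let n > 1 be an integer and let p(x) = x^n + a_{n−1}x^{n−1} + ... + a_2 x^2 + a_1 x + (−1)^{n+1} be a polynomial with integer coefficients a_1, ..., a_{n−1} satisfying |a_{n−1}| > |a_{n−2}| + ... + |a_2| + |a_1| + 2, and let θ_1, θ_2, ..., θ_n ∈ ℂ be the roots of p. Then θ_1 · θ_2 · ... · θ_n = −1, and if for some integers d_1, d_2, ..., d_n one has θ_1^{d_1} · θ_2^{d_2} · ... · θ_n^{d_n} = 1, then there exists an integer z such that d_1 = d_2 = ... = d_n = 2z. -/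
/-!
The constant term of `p` is `(-1)^(n+1)`, so Vieta gives `∏ θᵢ = -1`. The hypothesis on `a_{n-1}`
is Perron's condition: no root lies on the unit circle, and dividing `p` by `X - θ` for a root
with `|θ| > 1` leaves a cofactor whose lower coefficients have absolute sum `< 1`, so exactly one
root `θᵢ₀` lies outside the unit disc. A proper factor of `p` over `ℤ` would then have all its
roots inside the disc although its constant term is a nonzero integer, so `p` is irreducible and
its Galois group acts transitively on the roots. Given `∏ θᵢ ^ dᵢ = 1`, move a root carrying the
maximal exponent `dⱼ` to `θᵢ₀` by a Galois automorphism and take `log |·|`: the identity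
`∑ (dⱼ - dᵢ) log |θ_{π i}| = 0` has non-positive terms, so all `dᵢ` agree, and `(-1)^d = 1`
forces `d` to be even.
-/

open Polynomial

/-- The polynomial `p(x) = x^n + a_{n-1} x^{n-1} + ⋯ + a_2 x^2 + a_1 x + (-1)^{n+1}`
with integer coefficients. -/
noncomputable def pisotPoly (n : ℕ) (a : ℕ → ℤ) : Polynomial ℤ :=
  X ^ n + ∑ i ∈ Finset.Ico 1 n, C (a i) * X ^ i + C ((-1 : ℤ) ^ (n + 1))

open Finset

section LogEmbedding

variable {ι : Type*} [Fintype ι]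

theorem eq_of_le_of_sum_mul_eq_zero {v d : ι → ℝ} {k : ι} (hv : ∑ i, v i = 0)
    (hneg : ∀ i ≠ k, v i < 0) (hmax : ∀ i, d i ≤ d k) (hd : ∑ i, d i * v i = 0) (i : ι) :
    d i = d k := by
  have hsum : ∑ i, (d k - d i) * v i = 0 := by
    simp only [sub_mul, sum_sub_distrib, ← mul_sum, hv, hd, mul_zero, sub_zero]
  have hterm : ∀ i ∈ univ, (d k - d i) * v i ≤ 0 := fun i _ => by
    rcases eq_or_ne i k with rfl | hi
    · simp
    · exact mul_nonpos_of_nonneg_of_nonpos (sub_nonneg.2 (hmax i)) (hneg i hi).le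
  rcases eq_or_ne i k with rfl | hi
  · rfl
  · rcases mul_eq_zero.1 ((sum_eq_zero_iff_of_nonpos hterm).1 hsum i (mem_univ i)) with h | h
    · linarith
    · exact absurd h (hneg i hi).ne

theorem sum_mul_log_norm_eq_zero {w : ι → ℂ} (hw : ∀ i, w i ≠ 0) {d : ι → ℤ}
    (h : ∏ i, w i ^ d i = 1) : ∑ i, (d i : ℝ) * Real.log ‖w i‖ = 0 := by
  have := congrArg (fun z => Real.log ‖z‖) h
  simp only [norm_prod, norm_zpow, norm_one, Real.log_one] at this
  rw [Real.log_prod fun i _ => zpow_ne_zero _ (norm_ne_zero_iff.2 (hw i))] at this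
  simpa [Real.log_zpow] using this

end LogEmbedding

namespace Polynomial

section Perron

variable {f g : ℂ[X]} {m : ℕ}

theorem norm_lt_one_of_isRoot_of_sum_norm_coeff_lt_one (hg : g.Monic) (hdeg : g.natDegree = m)
    (hsum : ∑ k ∈ range m, ‖g.coeff k‖ < 1) {w : ℂ} (hw : g.IsRoot w) : ‖w‖ < 1 := by
  by_contra! hw1
  have heval : w ^ m = -∑ k ∈ range m, g.coeff k * w ^ k := by
    have := hw.eq_zero
    rw [eval_eq_sum_range, sum_range_succ, hg.coeff_natDegree, hdeg] at this
    linear_combination this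
  have hle : ‖w‖ ^ m ≤ (∑ k ∈ range m, ‖g.coeff k‖) * ‖w‖ ^ m := calc
    ‖w‖ ^ m = ‖∑ k ∈ range m, g.coeff k * w ^ k‖ := by rw [← norm_pow, heval, norm_neg]
    _ ≤ ∑ k ∈ range m, ‖g.coeff k‖ * ‖w‖ ^ m := by
      refine (norm_sum_le _ _).trans (sum_le_sum fun k hk => ?_)
      rw [norm_mul, norm_pow]
      gcongr
      exact (mem_range.1 hk).le
    _ = _ := (sum_mul ..).symm
  have : 0 < ‖w‖ ^ m := pow_pos (one_pos.trans_le hw1) m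
  nlinarith

theorem sum_norm_coeff_lt_one_of_perron (hg : g.Monic) (hdeg : g.natDegree = m) {z : ℂ}
    (hfac : f = (X - C z) * g) (hz : 1 < ‖z‖)
    (hperron : ∑ k ∈ range m, ‖f.coeff k‖ + 1 < ‖f.coeff m‖) :
    ∑ k ∈ range m, ‖g.coeff k‖ < 1 := by
  -- `z g = X g - f` coefficientwise: summing norms in degrees `< m`, and bounding `f.coeff m`
  -- through degree `m`, gives `‖z‖ S < S + ‖z‖ - 1` for `S = ∑ k < m, ‖g.coeff k‖`.
  have hcoeff : ∀ k, z * g.coeff k = (X * g).coeff k - f.coeff k := fun k => by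
    rw [hfac, sub_mul, coeff_sub, coeff_C_mul]; ring
  have hshift : ∑ k ∈ range (m + 1), ‖(X * g).coeff k‖ = ∑ k ∈ range m, ‖g.coeff k‖ := by
    simp only [sum_range_succ', coeff_X_mul, coeff_X_mul_zero, norm_zero, add_zero]
  have hlow : ‖z‖ * ∑ k ∈ range m, ‖g.coeff k‖ ≤
      ∑ k ∈ range m, ‖(X * g).coeff k‖ + ∑ k ∈ range m, ‖f.coeff k‖ := by
    rw [mul_sum, ← sum_add_distrib]
    exact sum_le_sum fun k _ => by rw [← norm_mul, hcoeff]; exact norm_sub_le _ _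
  have htop : ‖f.coeff m‖ ≤ ‖(X * g).coeff m‖ + ‖z‖ := by
    have hm : f.coeff m = (X * g).coeff m - z := by
      have := hcoeff m
      rw [← hdeg, hg.coeff_natDegree, hdeg] at this
      linear_combination this
    exact hm ▸ norm_sub_le _ _
  rw [sum_range_succ] at hshift
  nlinarith

theorem norm_ne_one_of_perron (hf : f.Monic) (hdeg : f.natDegree = m + 1)
    (hperron : ∑ k ∈ range m, ‖f.coeff k‖ + 1 < ‖f.coeff m‖) {z : ℂ} (hz : f.IsRoot z) :
    ‖z‖ ≠ 1 := by
  intro hz1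
  have heval : f.coeff m * z ^ m = -(∑ k ∈ range m, f.coeff k * z ^ k + z ^ (m + 1)) := by
    have := hz.eq_zero
    rw [eval_eq_sum_range, hdeg, sum_range_succ, sum_range_succ, ← hdeg, hf.coeff_natDegree,
      hdeg] at this
    linear_combination this
  have : ‖f.coeff m‖ ≤ ∑ k ∈ range m, ‖f.coeff k‖ + 1 := calc
    ‖f.coeff m‖ = ‖f.coeff m * z ^ m‖ := by rw [norm_mul, norm_pow, hz1, one_pow, mul_one]
    _ ≤ ‖∑ k ∈ range m, f.coeff k * z ^ k‖ + ‖z ^ (m + 1)‖ := by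
      rw [heval, norm_neg]; exact norm_add_le _ _
    _ ≤ ∑ k ∈ range m, ‖f.coeff k‖ + 1 := by
      gcongr
      · refine (norm_sum_le _ _).trans (le_of_eq (sum_congr rfl fun k _ => ?_))
        rw [norm_mul, norm_pow, hz1, one_pow, mul_one]
      · rw [norm_pow, hz1, one_pow]
  linarith

theorem norm_lt_one_of_isRoot_of_perron (hf : f.Monic) (hdeg : f.natDegree = m + 1)
    (hperron : ∑ k ∈ range m, ‖f.coeff k‖ + 1 < ‖f.coeff m‖) {z : ℂ}
    (hfac : f = (X - C z) * g) (hz : 1 < ‖z‖) {w : ℂ} (hw : g.IsRoot w) : ‖w‖ < 1 := by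
  have hg : g.Monic := (monic_X_sub_C z).of_mul_monic_left (hfac ▸ hf)
  have hgdeg : g.natDegree = m := by
    rw [hfac, (monic_X_sub_C z).natDegree_mul hg, natDegree_X_sub_C] at hdeg
    omega
  exact norm_lt_one_of_isRoot_of_sum_norm_coeff_lt_one hg hgdeg
    (sum_norm_coeff_lt_one_of_perron hg hgdeg hfac hz hperron) hw

theorem norm_coeff_zero_lt_norm_leadingCoeff (hdeg : 0 < f.natDegree)
    (hroots : ∀ z, f.IsRoot z → ‖z‖ < 1) : ‖f.coeff 0‖ < ‖f.leadingCoeff‖ := by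
  have hf : f ≠ 0 := ne_zero_of_natDegree_gt hdeg
  by_cases h0 : f.coeff 0 = 0
  · simpa [h0] using hf
  have hsplit : f.Splits := IsAlgClosed.splits f
  have hprod : (f.roots.map (‖·‖)).prod < 1 := by
    have hne : f.roots ≠ 0 := by
      rw [← Multiset.card_pos, ← hsplit.natDegree_eq_card_roots]; exact hdeg
    simpa using Multiset.prod_map_lt_prod_map hne (‖·‖) 1
      (fun z hz => norm_pos_iff.2 fun h => h0 (by
        rw [coeff_zero_eq_eval_zero, ← IsRoot.def, ← h]; exact (mem_roots hf).1 hz))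
      (fun z hz => hroots z ((mem_roots hf).1 hz))
  rw [hsplit.coeff_zero_eq_leadingCoeff_mul_prod_roots, norm_mul, norm_mul, norm_pow, norm_neg,
    norm_one, one_pow, one_mul, show ‖f.roots.prod‖ = (f.roots.map (‖·‖)).prod from
      map_multiset_prod (normHom : ℂ →*₀ ℝ) _]
  exact mul_lt_of_lt_one_right (norm_pos_iff.2 (leadingCoeff_ne_zero.2 hf)) hprod

theorem exists_isRoot_one_lt_norm_of_perron (hf : f.Monic) (hdeg : f.natDegree = m + 1)
    (hperron : ∑ k ∈ range m, ‖f.coeff k‖ + 1 < ‖f.coeff m‖) (h0 : 1 ≤ ‖f.coeff 0‖) :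
    ∃ z, f.IsRoot z ∧ 1 < ‖z‖ := by
  by_contra! h
  have := norm_coeff_zero_lt_norm_leadingCoeff (hdeg ▸ m.succ_pos)
    fun z hz => (h z hz).lt_of_ne (norm_ne_one_of_perron hf hdeg hperron hz)
  rw [hf.leadingCoeff, norm_one] at this
  linarith

theorem exists_one_lt_norm_forall_ne_norm_lt_one_of_perron {ι : Type*} [Fintype ι]
    [DecidableEq ι] (hf : f.Monic) (hdeg : f.natDegree = m + 1)
    (hperron : ∑ k ∈ range m, ‖f.coeff k‖ + 1 < ‖f.coeff m‖) (h0 : 1 ≤ ‖f.coeff 0‖)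
    {θ : ι → ℂ} (hθ : f.roots = univ.val.map θ) :
    ∃ i₀, 1 < ‖θ i₀‖ ∧ ∀ j ≠ i₀, ‖θ j‖ < 1 := by
  replace hθ : f = ∏ i, (X - C (θ i)) := by
    rw [(IsAlgClosed.splits f).eq_prod_roots_of_monic hf, hθ, Multiset.map_map]
    rfl
  obtain ⟨z, hz, hz1⟩ := exists_isRoot_one_lt_norm_of_perron hf hdeg hperron h0
  have := hz.eq_zero
  rw [hθ, eval_prod, prod_eq_zero_iff] at this
  obtain ⟨i₀, -, hi₀⟩ := this
  rw [eval_sub, eval_X, eval_C, sub_eq_zero] at hi₀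
  subst hi₀
  refine ⟨i₀, hz1, fun j hj => norm_lt_one_of_isRoot_of_perron hf hdeg hperron
    (hθ.trans (mul_prod_erase univ _ (mem_univ i₀)).symm) hz1 ?_⟩
  rw [IsRoot, eval_prod, prod_eq_zero_iff]
  exact ⟨j, mem_erase.2 ⟨hj, mem_univ j⟩, by simp⟩

end Perron

section Integer

variable {f : ℤ[X]} {m : ℕ}

theorem sum_norm_coeff_map_add_one_lt (hperron : ∑ k ∈ range m, |f.coeff k| + 1 < |f.coeff m|) :
    ∑ k ∈ range m, ‖(f.map (Int.castRingHom ℂ)).coeff k‖ + 1 <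
      ‖(f.map (Int.castRingHom ℂ)).coeff m‖ := by
  simp only [coeff_map, eq_intCast, Complex.norm_intCast]
  exact_mod_cast hperron

theorem isUnit_of_forall_norm_lt_one {g : ℤ[X]} (hlc : IsUnit g.leadingCoeff)
    (h0 : g.coeff 0 ≠ 0) (hroots : ∀ w, (g.map (Int.castRingHom ℂ)).IsRoot w → ‖w‖ < 1) :
    IsUnit g := by
  have hinj : Function.Injective (Int.castRingHom ℂ) := (Int.castRingHom ℂ).injective_int
  have hdeg : g.natDegree = 0 := by
    by_contra hdeg
    have := norm_coeff_zero_lt_norm_leadingCoeff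
      (by rwa [natDegree_map_eq_of_injective hinj, Nat.pos_iff_ne_zero]) hroots
    rw [leadingCoeff_map_of_injective hinj, coeff_map] at this
    simp only [eq_intCast, Complex.norm_intCast] at this
    have hlt : |g.coeff 0| < |g.leadingCoeff| := by exact_mod_cast this
    rw [Int.isUnit_iff_abs_eq.1 hlc] at hlt
    exact (Int.one_le_abs h0).not_gt hlt
  rw [eq_C_of_natDegree_eq_zero hdeg]
  exact isUnit_C.2 (by rwa [leadingCoeff, hdeg] at hlc)

theorem irreducible_of_perron (hf : f.Monic) (hdeg : f.natDegree = m + 1) (h0 : f.coeff 0 ≠ 0)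
    (hperron : ∑ k ∈ range m, |f.coeff k| + 1 < |f.coeff m|) : Irreducible f := by
  set F := f.map (Int.castRingHom ℂ)
  have hF : F.Monic := hf.map _
  have hFdeg : F.natDegree = m + 1 := by rw [hf.natDegree_map, hdeg]
  have hF0 : 1 ≤ ‖F.coeff 0‖ := by
    rw [coeff_map, eq_intCast, Complex.norm_intCast]; exact_mod_cast Int.one_le_abs h0
  obtain ⟨z, hz, hz1⟩ :=
    exists_isRoot_one_lt_norm_of_perron hF hFdeg (sum_norm_coeff_map_add_one_lt hperron) hF0
  have hunit : ∀ g h : ℤ[X], f = g * h → (g.map (Int.castRingHom ℂ)).IsRoot z → IsUnit h := by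
    intro g h hgh hgz
    have hlc : IsUnit h.leadingCoeff := IsUnit.of_mul_eq_one_right _ (by
      rw [← leadingCoeff_mul, ← hgh, hf.leadingCoeff])
    have h0' : h.coeff 0 ≠ 0 := fun h' => h0 (by rw [hgh, mul_coeff_zero, h', mul_zero])
    refine isUnit_of_forall_norm_lt_one hlc h0' fun w hw =>
      norm_lt_one_of_isRoot_of_perron hF hFdeg (sum_norm_coeff_map_add_one_lt hperron)
        (g := (g.map (Int.castRingHom ℂ) /ₘ (X - C z)) * h.map (Int.castRingHom ℂ)) ?_ hz1 ?_
    · rw [← mul_assoc, mul_divByMonic_eq_iff_isRoot.2 hgz, ← Polynomial.map_mul, ← hgh]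
    · rw [IsRoot, eval_mul, hw.eq_zero, mul_zero]
  refine ⟨fun hu => ?_, fun g h hgh => ?_⟩
  · have := natDegree_eq_zero_of_isUnit hu
    omega
  · have : F.IsRoot z := hz
    rw [show F = g.map _ * h.map _ by rw [← Polynomial.map_mul, ← hgh], IsRoot, eval_mul,
      mul_eq_zero] at this
    rcases this with hg | hh
    · exact Or.inr (hunit g h hgh hg)
    · exact Or.inl (hunit h g (by rw [hgh, mul_comm]) hh)

end Integer

section Galois

variable {F E ι : Type*} [Field F] [Field E] [Algebra F E] [Fintype ι] {p : F[X]}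
  [Fact (p.map (algebraMap F E)).Splits]

theorem Gal.prod_zpow_smul_eq_one (ϕ : p.Gal) {x : ι → p.rootSet E} {d : ι → ℤ}
    (h : ∏ i, (x i : E) ^ d i = 1) : ∏ i, ((ϕ • x i : p.rootSet E) : E) ^ d i = 1 := by
  let ψ := algebraMap p.SplittingField E
  let y i := ((Gal.rootsEquivRoots p E).symm (x i) : p.SplittingField)
  have hy i : ψ (y i) = x i :=
    congrArg Subtype.val ((Gal.rootsEquivRoots p E).apply_symm_apply (x i))
  have hprod : ∏ i, y i ^ d i = 1 := ψ.injective (by simpa [map_prod, map_zpow₀, hy] using h)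
  -- the action on `p.rootSet E` is transported from `p.SplittingField` along `ψ`
  have hϕ i : ((ϕ • x i : p.rootSet E) : E) = ψ (ϕ (y i)) := rfl
  simp only [hϕ, ← map_zpow₀, ← map_prod, hprod, map_one]

theorem Gal.exists_perm_prod_zpow_eq_one [PerfectField F] (hp : Irreducible p) {θ : ι → E}
    (hθ : (p.map (algebraMap F E)).roots = univ.val.map θ) (i j : ι) :
    ∃ π : Equiv.Perm ι, π j = i ∧ ∀ d : ι → ℤ, ∏ k, θ k ^ d k = 1 → ∏ k, θ (π k) ^ d k = 1 := by
  have hinj : Function.Injective θ := by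
    have hnodup :=
      nodup_roots ((PerfectField.separable_of_irreducible hp).map (f := algebraMap F E))
    rw [hθ] at hnodup
    exact fun k l h => Multiset.inj_on_of_nodup_map hnodup k (mem_univ_val k) l (mem_univ_val l) h
  have hrange : Set.range θ = p.rootSet E := by
    ext z
    simp [rootSet, aroots, hθ]
  have := Gal.galAction_isPretransitive p E hp
  let e : ι ≃ p.rootSet E := (Equiv.ofInjective θ hinj).trans (Equiv.setCongr hrange)
  have he k : (e k : E) = θ k := rfl
  obtain ⟨ϕ, hϕ⟩ := MulAction.exists_smul_eq p.Gal (e j) (e i)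
  refine ⟨(e.trans (MulAction.toPerm ϕ)).trans e.symm, by simp [hϕ], fun d hd => ?_⟩
  have hθe y : θ (e.symm y) = y := congrArg Subtype.val (e.apply_symm_apply y)
  simp only [Equiv.trans_apply, MulAction.toPerm_apply, hθe]
  exact Gal.prod_zpow_smul_eq_one ϕ (by simpa only [he] using hd)

end Galois

theorem exists_eq_const_of_prod_zpow_eq_one {ι F : Type*} [Fintype ι] [Field F]
    [PerfectField F] [Algebra F ℂ] {p : F[X]} (hp : Irreducible p) {θ : ι → ℂ}
    (hθ : (p.map (algebraMap F ℂ)).roots = univ.val.map θ) {i₀ : ι}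
    (hsmall : ∀ j ≠ i₀, ‖θ j‖ < 1) (hnorm : ∏ i, ‖θ i‖ = 1) {d : ι → ℤ}
    (hd : ∏ i, θ i ^ d i = 1) : ∃ c, ∀ i, d i = c := by
  have : Fact (p.map (algebraMap F ℂ)).Splits := ⟨IsAlgClosed.splits _⟩
  have hθ0 i : θ i ≠ 0 := fun h => by
    rw [prod_eq_zero (mem_univ i) (by rw [h, norm_zero])] at hnorm
    exact zero_ne_one hnorm
  obtain ⟨j, -, hj⟩ := exists_max_image univ d ⟨i₀, mem_univ _⟩
  obtain ⟨π, hπ, hrel⟩ := Gal.exists_perm_prod_zpow_eq_one hp hθ i₀ j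
  refine ⟨d j, fun i => Int.cast_injective (α := ℝ) <| eq_of_le_of_sum_mul_eq_zero
    (v := fun k => Real.log ‖θ (π k)‖) (d := fun k => (d k : ℝ)) ?_ ?_ ?_ ?_ i⟩
  · rw [Equiv.sum_comp π fun k => Real.log ‖θ k‖,
      ← Real.log_prod fun k _ => norm_ne_zero_iff.2 (hθ0 k), hnorm, Real.log_one]
  · exact fun k hk => Real.log_neg (norm_pos_iff.2 (hθ0 _))
      (hsmall _ fun h => hk (π.injective (h.trans hπ.symm)))
  · exact fun k => Int.cast_le.2 (hj k (mem_univ k))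
  · exact sum_mul_log_norm_eq_zero (fun k => hθ0 (π k)) (hrel d hd)

end Polynomial

section PisotPoly

variable {n : ℕ} (a : ℕ → ℤ)

theorem degree_pisotPoly_sub_X_pow_lt (hn : 0 < n) :
    (pisotPoly n a - X ^ n).degree < (n : WithBot ℕ) := by
  rw [pisotPoly, add_assoc, add_sub_cancel_left]
  refine (degree_add_le _ _).trans_lt (max_lt ((degree_sum_le _ _).trans_lt ?_) ?_)
  · refine (Finset.sup_lt_iff (WithBot.bot_lt_coe n)).2 fun i hi => ?_
    exact (degree_C_mul_X_pow_le _ _).trans_lt (WithBot.coe_lt_coe.2 (mem_Ico.1 hi).2)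
  · exact (degree_C_le).trans_lt (by exact_mod_cast hn)

theorem pisotPoly_monic (hn : 0 < n) : (pisotPoly n a).Monic := by
  rw [← add_sub_cancel (X ^ n) (pisotPoly n a)]
  exact monic_X_pow_add (degree_pisotPoly_sub_X_pow_lt a hn)

theorem natDegree_pisotPoly (hn : 0 < n) : (pisotPoly n a).natDegree = n := by
  rw [← add_sub_cancel (X ^ n) (pisotPoly n a), natDegree_add_eq_left_of_degree_lt, natDegree_X_pow]
  rw [degree_X_pow]
  exact degree_pisotPoly_sub_X_pow_lt a hn

theorem coeff_pisotPoly (k : ℕ) : (pisotPoly n a).coeff k =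
    (if k = n then 1 else 0) + (if k ∈ Ico 1 n then a k else 0) +
      (if k = 0 then (-1) ^ (n + 1) else 0) := by
  simp only [pisotPoly, coeff_add, coeff_X_pow, finsetSum_coeff, coeff_C_mul_X_pow, coeff_C,
    Finset.sum_ite_eq]

theorem coeff_pisotPoly_zero (hn : 0 < n) : (pisotPoly n a).coeff 0 = (-1) ^ (n + 1) := by
  simp [coeff_pisotPoly, hn.ne]

theorem coeff_pisotPoly_of_mem_Ico {k : ℕ} (hk : k ∈ Ico 1 n) : (pisotPoly n a).coeff k = a k := by
  have := mem_Ico.1 hk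
  simp [coeff_pisotPoly, hk, this.2.ne, Nat.one_le_iff_ne_zero.1 this.1]

theorem sum_abs_coeff_pisotPoly_add_one_lt (hn : 1 < n)
    (ha : (∑ i ∈ Ico 1 (n - 1), |a i|) + 2 < |a (n - 1)|) :
    ∑ k ∈ range (n - 1), |(pisotPoly n a).coeff k| + 1 < |(pisotPoly n a).coeff (n - 1)| := by
  rw [range_eq_Ico, sum_eq_sum_Ico_succ_bot (by omega), coeff_pisotPoly_zero a (by omega),
    coeff_pisotPoly_of_mem_Ico a (mem_Ico.2 ⟨by omega, by omega⟩),
    sum_congr rfl fun k hk =>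
      congrArg abs (coeff_pisotPoly_of_mem_Ico a (Ico_subset_Ico_right (Nat.sub_le n 1) hk))]
  simp only [abs_pow, abs_neg, abs_one, one_pow]
  linarith

theorem prod_eq_neg_one_of_roots_pisotPoly (hn : 0 < n) {θ : Fin n → ℂ}
    (hθ : ((pisotPoly n a).map (Int.castRingHom ℂ)).roots = univ.val.map θ) :
    ∏ i, θ i = -1 := by
  have hmonic := pisotPoly_monic a hn
  have := (IsAlgClosed.splits _).coeff_zero_eq_prod_roots_of_monic (hmonic.map (Int.castRingHom ℂ))
  rw [hθ, hmonic.natDegree_map, natDegree_pisotPoly a hn, coeff_map, coeff_pisotPoly_zero a hn,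
    pow_succ] at this
  simp only [map_mul, map_pow, map_neg, map_one] at this
  exact (mul_left_cancel₀ (pow_ne_zero _ (neg_ne_zero.2 one_ne_zero)) this).symm

end PisotPoly

/-- Let `θ_1, …, θ_n ∈ ℂ` be the roots of `p` (with `|a_{n-1}| > |a_{n-2}| + ⋯ + |a_1| + 2`).
Then `θ_1 ⋯ θ_n = -1`, and if `θ_1^{d_1} ⋯ θ_n^{d_n} = 1` for integers `d_i`, then all the
`d_i` are equal to one common even integer `2z`. -/
theorem pisotPoly_prod_roots_eq_neg_one_and_rigidity (n : ℕ) (hn : 1 < n) (a : ℕ → ℤ)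
    (ha : (∑ i ∈ Finset.Ico 1 (n - 1), |a i|) + 2 < |a (n - 1)|)
    (θ : Fin n → ℂ)
    (hθ : ((pisotPoly n a).map (Int.castRingHom ℂ)).roots = Multiset.map θ Finset.univ.val) :
    (∏ i, θ i) = -1 ∧
      ∀ d : Fin n → ℤ, (∏ i, θ i ^ d i) = 1 → ∃ z : ℤ, ∀ i, d i = 2 * z := by
  have hn0 : 0 < n := by omega
  have hmonic := pisotPoly_monic a hn0
  have hdeg : (pisotPoly n a).natDegree = n - 1 + 1 := by
    rw [natDegree_pisotPoly a hn0]; omega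
  have hcoeff0 := coeff_pisotPoly_zero a hn0
  have hperron := sum_abs_coeff_pisotPoly_add_one_lt a hn ha
  have hprod := prod_eq_neg_one_of_roots_pisotPoly a hn0 hθ
  refine ⟨hprod, fun d hd => ?_⟩
  obtain ⟨i₀, -, hsmall⟩ := exists_one_lt_norm_forall_ne_norm_lt_one_of_perron (hmonic.map _)
    (by rwa [hmonic.natDegree_map]) (sum_norm_coeff_map_add_one_lt hperron)
    (by simp [coeff_map, hcoeff0]) hθ
  have hirr := (IsPrimitive.Int.irreducible_iff_irreducible_map_cast hmonic.isPrimitive).1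
    (irreducible_of_perron hmonic hdeg (by simp [hcoeff0]) hperron)
  have hθℚ : (((pisotPoly n a).map (Int.castRingHom ℚ)).map (algebraMap ℚ ℂ)).roots =
      univ.val.map θ := by
    rwa [Polynomial.map_map, RingHom.ext_int ((algebraMap ℚ ℂ).comp _) (Int.castRingHom ℂ)]
  obtain ⟨c, hc⟩ := exists_eq_const_of_prod_zpow_eq_one hirr hθℚ hsmall
    (by rw [← norm_prod, hprod, norm_neg, norm_one]) hd
  obtain ⟨z, hz⟩ : Even c := by
    refine Int.not_odd_iff_even.1 fun hodd => ?_
    have : (-1 : ℂ) ^ c = 1 := by rw [← hprod, ← prod_zpow]; simpa [hc] using hd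
    rw [hodd.neg_one_zpow] at this
    norm_num at this
  exact ⟨z, fun i => by rw [hc, hz, two_mul]⟩
end

section
/- Let F = FreeGroup ℕ with generators x_0, x_1, x_2, ... and let φ : F →* F be the homomorphism (via FreeGroup.lift) determined by φ(x_0) = x_0 and φ(x_{i+1}) = x_i * x_{i+1}. Then for every n ≥ 1 and every x ∈ γ_n(F) there exists y ∈ γ_n(F) such that x and y * φ(y)⁻¹ are congruent modulo γ_{n+1}(F), i.e., y * φ(y)⁻¹ * x⁻¹ ∈ γ_{n+1}(F). -/
/-!
Write `γ n` for `(⊤ : Subgroup G).lowerCentralSeries n`, so that `γ 0 = G`. Modulo `γ (n + 1)`,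
the map `y ↦ y φ(y)⁻¹` is the endomorphism `1 - φ` of the abelian group `γ n / γ (n + 1)`, and we
show by induction on `n` that it is onto. For `n = 0` this holds because `(1 - φ)(-x_{i+1}) = x_i`
in the abelianization. Next, `γ (n + 1) / γ (n + 2)` is generated by the commutators `[a, g]` with
`a ∈ γ n`, which are bilinear; writing `a = (1 - φ) b` gives
`[a, g] = (1 - φ)[b, g] + [φ b, φ(g) g⁻¹]`. So the subgroup of those `g` with `[γ n, g]` inside
the image contains `g` as soon as it contains `φ(g) g⁻¹`, and since `φ(x_0) x_0⁻¹ = 1` and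
`φ(x_{i+1}) x_{i+1}⁻¹ = x_i` it contains every generator.
-/

/-- The endomorphism `φ` of `F = FreeGroup ℕ` determined by `φ(x_0) = x_0` and
`φ(x_{i+1}) = x_i * x_{i+1}`. -/
noncomputable def phiFree : FreeGroup ℕ →* FreeGroup ℕ :=
  FreeGroup.lift fun i =>
    match i with
    | 0 => FreeGroup.of 0
    | Nat.succ j => FreeGroup.of j * FreeGroup.of (j + 1)

open Subgroup QuotientGroup
open scoped commutatorElement

section CentralCommutator

variable {G : Type*} [Group G] {a b c : G}

theorem commutatorElement_mul_left_of_mem_center (h : ⁅b, c⁆ ∈ center G) :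
    ⁅a * b, c⁆ = ⁅a, c⁆ * ⁅b, c⁆ := by
  rw [commutatorElement_mul_left_eq_conj_mul, mem_center_iff.mp h a, mul_inv_cancel_right,
    mem_center_iff.mp h]

theorem commutatorElement_mul_right_of_mem_center (h : ⁅a, c⁆ ∈ center G) :
    ⁅a, b * c⁆ = ⁅a, b⁆ * ⁅a, c⁆ := by
  rw [commutatorElement_mul_right_eq_mul_conj, mul_assoc _ b, mem_center_iff.mp h b,
    ← mul_assoc, mul_inv_cancel_right]

theorem commutatorElement_inv_left_of_mem_center (h : ⁅a, b⁆ ∈ center G) :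
    ⁅a⁻¹, b⁆ = ⁅a, b⁆⁻¹ := by
  rw [commutatorElement_inv_left, ← commutatorElement_inv,
    mem_center_iff.mp (inv_mem h) a⁻¹, inv_mul_cancel_right]

theorem commutatorElement_inv_right_of_mem_center (h : ⁅a, b⁆ ∈ center G) :
    ⁅a, b⁻¹⁆ = ⁅a, b⁆⁻¹ := by
  rw [commutatorElement_inv_right, ← commutatorElement_inv,
    mem_center_iff.mp (inv_mem h) b⁻¹, inv_mul_cancel_right]

theorem commutatorElement_mul_inv_mul_of_mem_center {p x : G} (hc : c ∈ center G)
    (hp : ⁅p, x⁆ ∈ center G) : ⁅b * p⁻¹ * c, x⁆ = ⁅b, x⁆ * ⁅p, x⁆⁻¹ := by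
  have hcx : ⁅c, x⁆ = 1 :=
    commutatorElement_eq_one_iff_mul_comm.mpr (mem_center_iff.mp hc x).symm
  have hpx : ⁅p⁻¹, x⁆ = ⁅p, x⁆⁻¹ := commutatorElement_inv_left_of_mem_center hp
  rw [commutatorElement_mul_left_of_mem_center (hcx ▸ one_mem _), hcx, mul_one,
    commutatorElement_mul_left_of_mem_center (hpx ▸ inv_mem hp), hpx]

end CentralCommutator

theorem QuotientGroup.mk_commutatorElement {G : Type*} [Group G] {N : Subgroup G} [N.Normal]
    (a b : G) : ((⁅a, b⁆ : G) : G ⧸ N) = ⁅(a : G ⧸ N), (b : G ⧸ N)⁆ :=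
  map_commutatorElement (mk' N) a b

section LowerCentralSeries

variable {G : Type*} [Group G]

local notation "γ" => Subgroup.lowerCentralSeries (⊤ : Subgroup G)

theorem map_mem_lowerCentralSeries {H : Type*} [Group H] (f : G →* H) {n : ℕ} {a : G}
    (ha : a ∈ γ n) : f a ∈ (⊤ : Subgroup H).lowerCentralSeries n := by
  have h : f a ∈ ((⊤ : Subgroup G).map f).lowerCentralSeries n := by
    rw [← map_lowerCentralSeries]
    exact mem_map_of_mem f ha
  exact lowerCentralSeries_mono n le_top h

theorem mk_mem_center_of_mem_lowerCentralSeries {n : ℕ} {a : G} (ha : a ∈ γ n) :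
    (a : G ⧸ γ (n + 1)) ∈ center (G ⧸ γ (n + 1)) := by
  refine mem_center_iff.mpr fun q => QuotientGroup.induction_on q fun g => ?_
  rw [← mk_mul, ← mk_mul, QuotientGroup.eq]
  simpa [commutatorElement_def, mul_assoc] using
    commutator_mem_commutator (inv_mem ha) (mem_top g⁻¹)

theorem commutatorElement_mk_mem_center {n : ℕ} {a : G} (ha : a ∈ γ n)
    (v : G ⧸ γ (n + 1 + 1)) : ⁅(a : G ⧸ γ (n + 1 + 1)), v⁆ ∈ center (G ⧸ γ (n + 1 + 1)) := by
  induction v using QuotientGroup.induction_on with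
  | H g =>
    rw [← mk_commutatorElement]
    exact mk_mem_center_of_mem_lowerCentralSeries (commutator_mem_commutator ha (mem_top g))

/-- The map `1 - φ` on `γ n / γ (n + 1)`, with values read in `G ⧸ γ (n + 1)`. -/
@[simps]
def mulInvMapMod (φ : G →* G) (n : ℕ) : γ n →* G ⧸ γ (n + 1) where
  toFun y := ((y * (φ y)⁻¹ : G) : G ⧸ γ (n + 1))
  map_one' := by simp only [OneMemClass.coe_one, map_one, inv_one, mul_one, mk_one]
  map_mul' y z := by
    have hz := mk_mem_center_of_mem_lowerCentralSeries
      (mul_mem z.2 (inv_mem (map_mem_lowerCentralSeries φ z.2)))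
    have e : (y * z * (φ (y * z))⁻¹ : G) = y * (z * (φ z)⁻¹) * (φ y)⁻¹ := by
      simp only [map_mul, mul_inv_rev, mul_assoc]
    show ((y * z * (φ (y * z))⁻¹ : G) : G ⧸ γ (n + 1)) =
      ((y * (φ y)⁻¹ : G) : G ⧸ γ (n + 1)) * ((z * (φ z)⁻¹ : G) : G ⧸ γ (n + 1))
    rw [e]
    simp only [mk_mul] at hz ⊢
    rw [mul_assoc, ← mem_center_iff.mp hz, mul_assoc]

variable {φ : G →* G}

variable (φ) in
def MulInvMapModSurjective (n : ℕ) : Prop :=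
  (γ n).map (mk' (γ (n + 1))) ≤ (mulInvMapMod φ n).range

theorem mk_mem_range_mulInvMapMod_iff {n : ℕ} {x : G} :
    (x : G ⧸ γ (n + 1)) ∈ (mulInvMapMod φ n).range ↔
      ∃ y ∈ γ n, y * (φ y)⁻¹ * x⁻¹ ∈ γ (n + 1) := by
  simp only [MonoidHom.mem_range, Subtype.exists, mulInvMapMod_apply, eq_iff_div_mem,
    div_eq_mul_inv, exists_prop]

variable (φ) in
def commutatorRangeSubgroup (n : ℕ) : Subgroup G where
  carrier :=
    {g | ∀ a ∈ γ n, ((⁅a, g⁆ : G) : G ⧸ γ (n + 1 + 1)) ∈ (mulInvMapMod φ (n + 1)).range}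
  one_mem' a _ := by
    rw [commutatorElement_one_right, mk_one]
    exact one_mem _
  mul_mem' {g h} hg hh a ha := by
    rw [mk_commutatorElement, mk_mul,
      commutatorElement_mul_right_of_mem_center (commutatorElement_mk_mem_center ha _),
      ← mk_commutatorElement, ← mk_commutatorElement]
    exact mul_mem (hg a ha) (hh a ha)
  inv_mem' {g} hg a ha := by
    rw [mk_commutatorElement, mk_inv,
      commutatorElement_inv_right_of_mem_center (commutatorElement_mk_mem_center ha _),
      ← mk_commutatorElement]
    exact inv_mem (hg a ha)

theorem mem_commutatorRangeSubgroup_of_map_mul_inv_mem {n : ℕ}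
    (hn : MulInvMapModSurjective φ n) {g : G}
    (hg : φ g * g⁻¹ ∈ commutatorRangeSubgroup φ n) : g ∈ commutatorRangeSubgroup φ n := by
  intro a ha
  obtain ⟨⟨b, hb⟩, hab⟩ := hn (mem_map_of_mem _ ha)
  obtain ⟨c, hc, rfl⟩ : ∃ c ∈ γ (n + 1), a = b * (φ b)⁻¹ * c :=
    ⟨_, QuotientGroup.eq.mp hab, (mul_inv_cancel_left _ _).symm⟩
  have hφb := map_mem_lowerCentralSeries φ hb
  have key : ((⁅b * (φ b)⁻¹ * c, g⁆ : G) : G ⧸ γ (n + 1 + 1)) =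
      mulInvMapMod φ (n + 1) ⟨⁅b, g⁆, commutator_mem_commutator hb (mem_top g)⟩ *
        ((⁅φ b, φ g * g⁻¹⁆ : G) : G ⧸ γ (n + 1 + 1)) := by
    have hφb' := commutatorElement_mk_mem_center hφb
    rw [mulInvMapMod_apply, map_commutatorElement]
    simp only [mk_mul, mk_inv, mk_commutatorElement]
    rw [commutatorElement_mul_inv_mul_of_mem_center
        (mk_mem_center_of_mem_lowerCentralSeries hc) (hφb' _),
      commutatorElement_mul_right_of_mem_center (hφb' _),
      commutatorElement_inv_right_of_mem_center (hφb' _)]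
    group
  rw [key]
  exact mul_mem ⟨_, rfl⟩ (hg _ hφb)

theorem mulInvMapModSurjective_succ {n : ℕ} (h : commutatorRangeSubgroup φ n = ⊤) :
    MulInvMapModSurjective φ (n + 1) := by
  rw [MulInvMapModSurjective, map_le_iff_le_comap]
  refine commutator_le.mpr fun a ha g _ => ?_
  exact (h ▸ mem_top g : g ∈ commutatorRangeSubgroup φ n) a ha

end LowerCentralSeries

theorem phiFree_of_zero : phiFree (FreeGroup.of 0) = FreeGroup.of 0 := by
  simp [phiFree]

theorem phiFree_of_succ (i : ℕ) :
    phiFree (FreeGroup.of (i + 1)) = FreeGroup.of i * FreeGroup.of (i + 1) := by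
  simp [phiFree]

theorem mulInvMapModSurjective_phiFree_zero : MulInvMapModSurjective phiFree 0 := by
  rw [MulInvMapModSurjective, map_le_iff_le_comap]
  refine (FreeGroup.closure_range_of ℕ).symm.le.trans ((closure_le _).mpr ?_)
  rintro _ ⟨i, rfl⟩
  refine mk_mem_range_mulInvMapMod_iff.mpr ⟨(FreeGroup.of (i + 1))⁻¹, mem_top _, ?_⟩
  have e : (FreeGroup.of (i + 1))⁻¹ * (phiFree (FreeGroup.of (i + 1))⁻¹)⁻¹ *
      (FreeGroup.of i)⁻¹ = ⁅(FreeGroup.of (i + 1))⁻¹, FreeGroup.of i⁆ := by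
    rw [map_inv, phiFree_of_succ, commutatorElement_def]
    group
  rw [e]
  exact commutator_mem_commutator (mem_top _) (mem_top _)

theorem commutatorRangeSubgroup_phiFree_eq_top {n : ℕ}
    (hn : MulInvMapModSurjective phiFree n) : commutatorRangeSubgroup phiFree n = ⊤ := by
  rw [eq_top_iff, ← FreeGroup.closure_range_of, closure_le]
  rintro _ ⟨i, rfl⟩
  induction i with
  | zero =>
    refine mem_commutatorRangeSubgroup_of_map_mul_inv_mem hn ?_
    rw [phiFree_of_zero, mul_inv_cancel]
    exact one_mem _
  | succ i ih =>
    refine mem_commutatorRangeSubgroup_of_map_mul_inv_mem hn ?_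
    rwa [phiFree_of_succ, mul_inv_cancel_right]

theorem mulInvMapModSurjective_phiFree (n : ℕ) : MulInvMapModSurjective phiFree n := by
  induction n with
  | zero => exact mulInvMapModSurjective_phiFree_zero
  | succ n ih => exact mulInvMapModSurjective_succ (commutatorRangeSubgroup_phiFree_eq_top ih)

/-- For every `n` and every `x ∈ lowerCentralSeries F n` (that is, `x ∈ γ_{n+1}(F)`),
there is `y ∈ lowerCentralSeries F n` such that `x` and `y * φ(y)⁻¹` are congruent
modulo `lowerCentralSeries F (n+1)`. -/
theorem phiFree_surjective_mod_lowerCentralSeries (n : ℕ) (x : FreeGroup ℕ)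
    (hx : x ∈ (⊤ : Subgroup (FreeGroup ℕ)).lowerCentralSeries n) :
    ∃ y ∈ (⊤ : Subgroup (FreeGroup ℕ)).lowerCentralSeries n,
      y * (phiFree y)⁻¹ * x⁻¹ ∈ (⊤ : Subgroup (FreeGroup ℕ)).lowerCentralSeries (n + 1) :=
  mk_mem_range_mulInvMapMod_iff.mp (mulInvMapModSurjective_phiFree n (mem_map_of_mem _ hx))
end
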